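/- arXiv:1405.5228 — 5 statements merged into one kernel-verified Lean document; each statement's English description precedes it below -/
import Mathlib

section
/- Let μ be a Borel probability measure on [0,1]^d with cumulative distribution function H, and let w = (w₁,…,w_d) ∈ (0,1]^d satisfy w₁ + ⋯ + w_d = 1. Then ∫_{[0,1]^d} ν_w(u) dμ(u) = (1/d) Σ_{i=1}^d ∫₀¹ H(1,…,1,x^{wᵢ},1,…,1) dx − ∫₀¹ H(x^{w₁},…,x^{w_d}) dx, where in the i-th summand x^{wᵢ} appears in the i-th coordinate and all other coordinates equal 1. -/
/-!
For `g` with values in `[0,1]` the layer-cake formula gives `∫ g dμ = 1 - ∫₀¹ μ(g ≤ x) dx`.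
Apply it to each `uᵢ^(1/wᵢ)` and to their maximum: on the unit cube, `uᵢ^(1/wᵢ) ≤ x` iff
`uᵢ ≤ x^wᵢ`, so these tail measures are exactly the values of `H` in the formula, and the
theorem follows by linearity since `ν_w` is the maximum minus the mean of the `uᵢ^(1/wᵢ)`.
-/

open MeasureTheory Finset

/-- The multivariate `w`-madogram integrand
`ν_w(u) = max_i uᵢ^(1/wᵢ) − (1/d) Σᵢ uᵢ^(1/wᵢ)`. -/
noncomputable def nuW (d : ℕ) (hd : 0 < d) (w u : Fin d → ℝ) : ℝ :=
  (Finset.univ.sup' (Finset.univ_nonempty_iff.mpr (Fin.pos_iff_nonempty.mp hd))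
      fun i => u i ^ (1 / w i)) -
    (1 / (d : ℝ)) * ∑ i, u i ^ (1 / w i)

/-- Cumulative distribution function of a measure on `[0,1]^d ⊆ ℝ^d`. -/
noncomputable def cdf {d : ℕ} (μ : Measure (Fin d → ℝ)) (u : Fin d → ℝ) : ℝ :=
  (μ {v | ∀ i, v i ≤ u i}).toReal

lemma integral_eq_one_sub_integral_measureReal_le {α : Type*} [MeasurableSpace α]
    {μ : Measure α} [IsProbabilityMeasure μ] {g : α → ℝ} (hg : AEMeasurable g μ)
    (hg01 : ∀ᵐ a ∂μ, g a ∈ Set.Icc (0 : ℝ) 1) :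
    ∫ a, g a ∂μ = 1 - ∫ x in (0 : ℝ)..1, μ.real {a | g a ≤ x} := by
  have hint : Integrable g μ := .of_mem_Icc 0 1 hg hg01
  have htail : ∀ t ∈ Set.Ioi (0 : ℝ) \ Set.Ioc 0 1, μ.real {a | t < g a} = 0 := by
    rintro t ⟨ht0, ht1⟩
    have ht : 1 < t := by simp_all
    rw [measureReal_eq_zero_iff, measure_eq_zero_iff_ae_notMem]
    filter_upwards [hg01] with a ha using not_lt.mpr (ha.2.trans ht.le)
  have hcdf : Monotone fun x => μ.real {a | g a ≤ x} := fun x y hxy =>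
    measureReal_mono fun a ha => le_trans ha hxy
  calc ∫ a, g a ∂μ = ∫ t in Set.Ioi 0, μ.real {a | t < g a} :=
        hint.integral_eq_integral_meas_lt (hg01.mono fun a ha => ha.1)
    _ = ∫ t in Set.Ioc 0 1, μ.real {a | t < g a} :=
        setIntegral_eq_of_subset_of_ae_sdiff_eq_zero nullMeasurableSet_Ioi
          Set.Ioc_subset_Ioi_self (.of_forall htail)
    _ = ∫ t in (0 : ℝ)..1, (1 - μ.real {a | g a ≤ t}) := by
        rw [intervalIntegral.integral_of_le zero_le_one]
        congr with t
        rw [← probReal_compl_eq_one_sub₀ (nullMeasurableSet_le hg aemeasurable_const)]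
        simp only [Set.compl_ofPred, not_le]
    _ = 1 - ∫ x in (0 : ℝ)..1, μ.real {a | g a ≤ x} := by
        rw [intervalIntegral.integral_sub intervalIntegrable_const hcdf.intervalIntegrable]
        simp

lemma rpow_one_div_le_iff_le_rpow {a x w : ℝ} (ha : 0 ≤ a) (hx : 0 ≤ x) (hw : 0 < w) :
    a ^ (1 / w) ≤ x ↔ a ≤ x ^ w := by
  rw [one_div]
  exact Real.rpow_inv_le_iff_of_pos ha hx hw

lemma rpow_one_div_mem_Icc {a w : ℝ} (ha : a ∈ Set.Icc (0 : ℝ) 1) (hw : 0 < w) :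
    a ^ (1 / w) ∈ Set.Icc (0 : ℝ) 1 :=
  ⟨Real.rpow_nonneg ha.1 _, Real.rpow_le_one ha.1 ha.2 (by positivity)⟩

section UnitCube

variable {d : ℕ} {μ : Measure (Fin d → ℝ)} {w : Fin d → ℝ}

lemma measurable_rpow_one_div_apply (i : Fin d) :
    Measurable fun u : Fin d → ℝ => u i ^ (1 / w i) := by
  fun_prop

lemma measurable_sup'_rpow_one_div (hne : (univ : Finset (Fin d)).Nonempty) :
    Measurable fun u : Fin d → ℝ => univ.sup' hne fun i => u i ^ (1 / w i) := by
  convert Finset.measurable_sup' hne fun i _ => measurable_rpow_one_div_apply (w := w) i with u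
  rw [Finset.sup'_apply]

lemma ae_rpow_one_div_apply_mem_Icc (hμ : ∀ᵐ u ∂μ, ∀ i, u i ∈ Set.Icc (0 : ℝ) 1)
    (hw : ∀ i, 0 < w i) (i : Fin d) : ∀ᵐ u ∂μ, u i ^ (1 / w i) ∈ Set.Icc (0 : ℝ) 1 :=
  hμ.mono fun _ hu => rpow_one_div_mem_Icc (hu i) (hw i)

lemma ae_sup'_rpow_one_div_mem_Icc (hμ : ∀ᵐ u ∂μ, ∀ i, u i ∈ Set.Icc (0 : ℝ) 1)
    (hw : ∀ i, 0 < w i) (hne : (univ : Finset (Fin d)).Nonempty) :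
    ∀ᵐ u ∂μ, univ.sup' hne (fun i => u i ^ (1 / w i)) ∈ Set.Icc (0 : ℝ) 1 :=
  hμ.mono fun _ hu => Finset.sup'_mem (Set.Icc (0 : ℝ) 1)
    (fun _ ha _ hb => ⟨le_sup_of_le_left ha.1, sup_le ha.2 hb.2⟩) _ hne _
    fun i _ => rpow_one_div_mem_Icc (hu i) (hw i)

lemma measureReal_rpow_one_div_le_eq_cdf_update
    (hμ : ∀ᵐ u ∂μ, ∀ i, u i ∈ Set.Icc (0 : ℝ) 1) (hw : ∀ i, 0 < w i) {x : ℝ} (hx : 0 ≤ x)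
    (i : Fin d) :
    μ.real {u | u i ^ (1 / w i) ≤ x} = cdf μ (Function.update (fun _ => 1) i (x ^ w i)) := by
  refine congrArg ENNReal.toReal (measure_congr ?_)
  rw [Filter.eventuallyEq_set]
  filter_upwards [hμ] with u hu
  simp only [Function.forall_update_iff (fun _ => (1 : ℝ)) fun j c => u j ≤ c,
    rpow_one_div_le_iff_le_rpow (hu i).1 hx (hw i)]
  exact (and_iff_left fun j _ => (hu j).2).symm

lemma measureReal_forall_rpow_one_div_le_eq_cdf
    (hμ : ∀ᵐ u ∂μ, ∀ i, u i ∈ Set.Icc (0 : ℝ) 1) (hw : ∀ i, 0 < w i) {x : ℝ} (hx : 0 ≤ x) :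
    μ.real {u | ∀ i, u i ^ (1 / w i) ≤ x} = cdf μ fun i => x ^ w i := by
  refine congrArg ENNReal.toReal (measure_congr ?_)
  rw [Filter.eventuallyEq_set]
  filter_upwards [hμ] with u hu
  exact forall_congr' fun i => rpow_one_div_le_iff_le_rpow (hu i).1 hx (hw i)

variable [IsProbabilityMeasure μ]

lemma integral_rpow_one_div_apply (hμ : ∀ᵐ u ∂μ, ∀ i, u i ∈ Set.Icc (0 : ℝ) 1)
    (hw : ∀ i, 0 < w i) (i : Fin d) :
    ∫ u, u i ^ (1 / w i) ∂μ =
      1 - ∫ x in (0 : ℝ)..1, cdf μ (Function.update (fun _ => 1) i (x ^ w i)) := by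
  rw [integral_eq_one_sub_integral_measureReal_le (measurable_rpow_one_div_apply i).aemeasurable
    (ae_rpow_one_div_apply_mem_Icc hμ hw i)]
  congr 1
  refine intervalIntegral.integral_congr fun x hx => ?_
  rw [Set.uIcc_of_le zero_le_one] at hx
  exact measureReal_rpow_one_div_le_eq_cdf_update hμ hw hx.1 i

lemma integral_sup'_rpow_one_div (hμ : ∀ᵐ u ∂μ, ∀ i, u i ∈ Set.Icc (0 : ℝ) 1)
    (hw : ∀ i, 0 < w i) (hne : (univ : Finset (Fin d)).Nonempty) :
    ∫ u, univ.sup' hne (fun i => u i ^ (1 / w i)) ∂μ =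
      1 - ∫ x in (0 : ℝ)..1, cdf μ fun i => x ^ w i := by
  rw [integral_eq_one_sub_integral_measureReal_le (measurable_sup'_rpow_one_div hne).aemeasurable
    (ae_sup'_rpow_one_div_mem_Icc hμ hw hne)]
  congr 1
  refine intervalIntegral.integral_congr fun x hx => ?_
  rw [Set.uIcc_of_le zero_le_one] at hx
  simp only [Finset.sup'_le_iff, mem_univ, true_implies]
  exact measureReal_forall_rpow_one_div_le_eq_cdf hμ hw hx.1

end UnitCube

theorem madogram_integral_formula (d : ℕ) (hd : 2 ≤ d)
    (μ : Measure (Fin d → ℝ)) [IsProbabilityMeasure μ]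
    (hμ : μ (Set.univ.pi fun _ : Fin d => Set.Icc (0:ℝ) 1)ᶜ = 0)
    (w : Fin d → ℝ) (hw : ∀ i, 0 < w i ∧ w i ≤ 1) :
    ∫ u, nuW d (by omega) w u ∂μ =
      (1 / (d : ℝ)) *
          (∑ i : Fin d, ∫ x in (0:ℝ)..1, cdf μ (Function.update (fun _ => (1:ℝ)) i (x ^ w i))) -
        ∫ x in (0:ℝ)..1, cdf μ fun i => x ^ w i := by
  have hcube : ∀ᵐ u ∂μ, ∀ i, u i ∈ Set.Icc (0 : ℝ) 1 := by
    filter_upwards [mem_ae_iff.mpr hμ] with u hu using Set.mem_univ_pi.mp hu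
  have hwpos : ∀ i, 0 < w i := fun i => (hw i).1
  have hne : (univ : Finset (Fin d)).Nonempty :=
    univ_nonempty_iff.mpr (Fin.pos_iff_nonempty.mp (by omega))
  have hint : ∀ i, Integrable (fun u : Fin d → ℝ => u i ^ (1 / w i)) μ := fun i =>
    .of_mem_Icc 0 1 (measurable_rpow_one_div_apply i).aemeasurable
      (ae_rpow_one_div_apply_mem_Icc hcube hwpos i)
  have hint_sup : Integrable (fun u : Fin d → ℝ => univ.sup' hne fun i => u i ^ (1 / w i)) μ :=
    .of_mem_Icc 0 1 (measurable_sup'_rpow_one_div hne).aemeasurable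
      (ae_sup'_rpow_one_div_mem_Icc hcube hwpos hne)
  unfold nuW
  rw [integral_sub hint_sup ((integrable_finsetSum _ fun i _ => hint i).const_mul _),
    integral_const_mul, integral_finsetSum _ fun i _ => hint i,
    integral_sup'_rpow_one_div hcube hwpos,
    sum_congr rfl fun i _ => integral_rpow_one_div_apply hcube hwpos i,
    sum_sub_distrib, sum_const, card_univ, Fintype.card_fin]
  field_simp
  ring
end

section
/- Let A : S_{d−1} → ℝ satisfy |A(w) − A(w′)| ≤ Σ_{i=1}^d |wᵢ − w′ᵢ| for all w, w′ ∈ S_{d−1} (with w_d = 1 − w₁ − ⋯ − w_{d−1}). Then for every integer k ≥ 1 and every w ∈ S_{d−1}, | Σ_{α ∈ Γ_k} A(α/k) b_α(w;k) − A(w) | ≤ Σ_{i=1}^d √(wᵢ(1−wᵢ)/k) ≤ d/(2√k). -/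
open Finset

/-- The unit simplex `S_{n} = {w ∈ [0,1]^n : w₁ + ⋯ + w_n ≤ 1}`. -/
def unitSimplex (n : ℕ) : Set (Fin n → ℝ) :=
  {w | (∀ i, 0 ≤ w i ∧ w i ≤ 1) ∧ ∑ i, w i ≤ 1}

/-- The set `Γ_k` of multi-indices `α ∈ {0,…,k}^n` with `α₁ + ⋯ + α_n ≤ k`. -/
def Gamma (n k : ℕ) : Finset (Fin n → ℕ) :=
  (Fintype.piFinset fun _ : Fin n => Finset.range (k + 1)).filter fun α => ∑ i, α i ≤ k

/-- The Bernstein basis polynomial `b_α(w;k)` on the simplex, where the last barycentric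
coordinate is `w_{n+1} = 1 − Σᵢ wᵢ` and the last index is `α_{n+1} = k − Σᵢ αᵢ`. -/
noncomputable def bern (n k : ℕ) (α : Fin n → ℕ) (w : Fin n → ℝ) : ℝ :=
  ((Nat.factorial k : ℝ) /
      ((∏ i, Nat.factorial (α i)) * Nat.factorial (k - ∑ i, α i))) *
    (∏ i, w i ^ α i) * (1 - ∑ i, w i) ^ (k - ∑ i, α i)

lemma BA.oneD_sum (k : ℕ) (x : ℝ) :
    ∑ t ∈ range (k+1), (k.choose t : ℝ) * x ^ t * (1 - x) ^ (k - t) = 1 := by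
  have := congrArg (Polynomial.eval x) (bernsteinPolynomial.sum ℝ k)
  simpa [bernsteinPolynomial, Polynomial.eval_finset_sum] using this

lemma BA.oneD_var (k : ℕ) (x : ℝ) :
    ∑ t ∈ range (k+1), ((k:ℝ)*x - t)^2 * ((k.choose t : ℝ) * x ^ t * (1 - x) ^ (k - t))
      = k * x * (1 - x) := by
  have := congrArg (Polynomial.eval x) (bernsteinPolynomial.variance ℝ k)
  simpa [bernsteinPolynomial, Polynomial.eval_finset_sum, mul_assoc, mul_comm, mul_left_comm]
    using this

lemma BA.group_lemma {ι : Type*} [Fintype ι] [DecidableEq ι] (k : ℕ) (v : ι → ℝ) (j : ι)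
    (F : ℕ → ℝ) :
    ∑ β ∈ piAntidiag (univ : Finset ι) k,
        F (β j) * ((Nat.multinomial univ β : ℝ) * ∏ i, v i ^ β i)
      = ∑ t ∈ range (k+1),
          F t * ((k.choose t : ℝ) * v j ^ t * (∑ i ∈ univ.erase j, v i) ^ (k - t)) := by
  have hj : j ∉ univ.erase j := notMem_erase _ _
  have hju : (univ : Finset ι) = cons j (univ.erase j) hj := by
    rw [cons_eq_insert, insert_erase (mem_univ j)]
  rw [hju, piAntidiag_cons, sum_disjiUnion]
  rw [Finset.Nat.sum_antidiagonal_eq_sum_range_succ_mk]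
  refine Finset.sum_congr rfl fun t ht => ?_
  rw [Finset.sum_map]
  have htk : t ≤ k := Nat.lt_succ_iff.mp (mem_range.mp ht)
  have key : ∀ g ∈ piAntidiag (univ.erase j) (k - t),
      F ((addRightEmbedding fun i => if i = j then t else 0) g j) *
        ((Nat.multinomial (cons j (univ.erase j) hj)
            ((addRightEmbedding fun i => if i = j then t else 0) g) : ℝ) *
          ∏ i ∈ cons j (univ.erase j) hj,
            v i ^ ((addRightEmbedding fun i => if i = j then t else 0) g) i)
      = F t * ((k.choose t : ℝ) * v j ^ t *
          ((Nat.multinomial (univ.erase j) g : ℝ) * ∏ i ∈ univ.erase j, v i ^ g i)) := by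
    intro g hg
    rw [mem_piAntidiag] at hg
    have hgj : g j = 0 := by
      by_contra h
      exact hj (hg.2 j h)
    have hβ : ∀ i, ((addRightEmbedding fun i => if i = j then t else 0) g) i
        = g i + if i = j then t else 0 := fun i => rfl
    have hβj : ((addRightEmbedding fun i => if i = j then t else 0) g) j = t := by
      rw [hβ, hgj]; simp
    have hβs : ∀ i ∈ univ.erase j,
        ((addRightEmbedding fun i => if i = j then t else 0) g) i = g i := by
      intro i hi
      rw [hβ, if_neg (ne_of_mem_erase hi), add_zero]
    rw [Nat.multinomial_cons]
    rw [hβj]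
    rw [Finset.sum_congr rfl hβs, hg.1]
    rw [Nat.add_sub_cancel' htk]
    rw [Nat.multinomial_congr hβs]
    rw [prod_cons, hβj, Finset.prod_congr rfl (fun i hi => by rw [hβs i hi])]
    push_cast
    ring
  rw [Finset.sum_congr rfl key, ← Finset.mul_sum, ← Finset.mul_sum,
    ← Finset.sum_pow_eq_sum_piAntidiag, Finset.erase_cons]

lemma BA.mom0 {ι : Type*} [Fintype ι] [DecidableEq ι] (k : ℕ) (v : ι → ℝ)
    (hv1 : ∑ i, v i = 1) :
    ∑ β ∈ piAntidiag (univ : Finset ι) k,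
        (Nat.multinomial univ β : ℝ) * ∏ i, v i ^ β i = 1 := by
  rw [← Finset.sum_pow_eq_sum_piAntidiag, hv1, one_pow]

lemma BA.momvar {ι : Type*} [Fintype ι] [DecidableEq ι] (k : ℕ) (v : ι → ℝ)
    (hv1 : ∑ i, v i = 1) (j : ι) :
    ∑ β ∈ piAntidiag (univ : Finset ι) k,
        ((k:ℝ) * v j - β j)^2 * ((Nat.multinomial univ β : ℝ) * ∏ i, v i ^ β i)
      = k * v j * (1 - v j) := by
  have herase : ∑ i ∈ univ.erase j, v i = 1 - v j := by
    rw [Finset.sum_erase_eq_sub (mem_univ j), hv1]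
  rw [BA.group_lemma k v j (fun t => ((k:ℝ) * v j - t)^2)]
  simp_rw [herase]
  exact BA.oneD_var k (v j)

lemma BA.jensen_abs {γ : Type*} (s : Finset γ) (P x : γ → ℝ) (hP : ∀ b ∈ s, 0 ≤ P b)
    (h1 : ∑ b ∈ s, P b = 1) :
    ∑ b ∈ s, |x b| * P b ≤ Real.sqrt (∑ b ∈ s, (x b)^2 * P b) := by
  have h := Real.sum_mul_le_sqrt_mul_sqrt s (fun b => |x b| * Real.sqrt (P b))
    (fun b => Real.sqrt (P b))
  have e1 : ∀ b ∈ s, (|x b| * Real.sqrt (P b)) * Real.sqrt (P b) = |x b| * P b := by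
    intro b hb
    rw [mul_assoc, Real.mul_self_sqrt (hP b hb)]
  have e2 : ∀ b ∈ s, (|x b| * Real.sqrt (P b))^2 = (x b)^2 * P b := by
    intro b hb
    rw [mul_pow, sq_abs, Real.sq_sqrt (hP b hb)]
  have e3 : ∀ b ∈ s, (Real.sqrt (P b))^2 = P b := fun b hb => Real.sq_sqrt (hP b hb)
  rw [Finset.sum_congr rfl e1, Finset.sum_congr rfl e2, Finset.sum_congr rfl e3, h1,
    Real.sqrt_one, mul_one] at h
  exact h

lemma BA.bridge (n k : ℕ) (f : (Fin n → ℕ) → ℝ) (w : Fin n → ℝ) :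
    ∑ α ∈ Gamma n k, f α * bern n k α w
      = ∑ β ∈ piAntidiag (univ : Finset (Fin (n+1))) k,
          f (Fin.init β) * ((Nat.multinomial univ β : ℝ) *
            ∏ j, (Fin.snoc w (1 - ∑ i, w i) : Fin (n+1) → ℝ) j ^ β j) := by
  refine Finset.sum_nbij' (fun α => Fin.snoc α (k - ∑ i, α i)) (fun β => Fin.init β) ?_ ?_ ?_ ?_ ?_
  · intro α hα
    rw [Gamma, mem_filter] at hα
    rw [mem_piAntidiag]
    constructor
    · rw [Fin.sum_univ_castSucc]
      simp only [Fin.snoc_castSucc, Fin.snoc_last]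
      omega
    · intro i _; exact mem_univ i
  · intro β hβ
    rw [mem_piAntidiag] at hβ
    have hsum : ∑ i : Fin n, Fin.init β i + β (Fin.last n) = k := by
      rw [← hβ.1, Fin.sum_univ_castSucc]; rfl
    rw [Gamma, mem_filter]
    constructor
    · rw [Fintype.mem_piFinset]
      intro i
      rw [mem_range]
      have : Fin.init β i ≤ ∑ j : Fin n, Fin.init β j :=
        Finset.single_le_sum (fun _ _ => Nat.zero_le _) (mem_univ i)
      omega
    · omega
  · intro α hα
    exact Fin.init_snoc _ _
  · intro β hβ
    rw [mem_piAntidiag] at hβ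
    have hsum : ∑ i : Fin n, Fin.init β i + β (Fin.last n) = k := by
      rw [← hβ.1, Fin.sum_univ_castSucc]; rfl
    have hlast : k - ∑ i : Fin n, Fin.init β i = β (Fin.last n) := by omega
    rw [hlast]
    exact Fin.snoc_init_self β
  · intro α hα
    rw [Gamma, mem_filter] at hα
    have hαk : ∑ i, α i ≤ k := hα.2
    rw [Fin.init_snoc]
    congr 1
    set β : Fin (n+1) → ℕ := Fin.snoc α (k - ∑ i, α i) with hβdef
    have hβsum : ∑ j, β j = k := by
      rw [Fin.sum_univ_castSucc]
      simp only [hβdef, Fin.snoc_castSucc, Fin.snoc_last]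
      omega
    have hprodfac : ∏ j, Nat.factorial (β j)
        = (∏ i, Nat.factorial (α i)) * Nat.factorial (k - ∑ i, α i) := by
      rw [Fin.prod_univ_castSucc]
      simp only [hβdef, Fin.snoc_castSucc, Fin.snoc_last]
    have hmult : (Nat.multinomial univ β : ℝ)
        = (Nat.factorial k : ℝ) /
            ((∏ i, Nat.factorial (α i)) * Nat.factorial (k - ∑ i, α i)) := by
      have hspec := Nat.multinomial_spec (univ : Finset (Fin (n+1))) β
      rw [hβsum, hprodfac] at hspec
      have hspec' : ((∏ i, Nat.factorial (α i)) * Nat.factorial (k - ∑ i, α i)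
          * Nat.multinomial univ β : ℝ) = (Nat.factorial k : ℝ) := by
        exact_mod_cast congrArg (Nat.cast : ℕ → ℝ) hspec
      have hpos : (0:ℝ) < ((∏ i, Nat.factorial (α i) : ℕ) : ℝ)
          * ((Nat.factorial (k - ∑ i, α i) : ℕ) : ℝ) := by positivity
      rw [eq_div_iff (ne_of_gt hpos)]
      push_cast at hspec' ⊢
      linarith
    have hprod : ∏ j, (Fin.snoc w (1 - ∑ i, w i) : Fin (n+1) → ℝ) j ^ β j
        = (∏ i, w i ^ α i) * (1 - ∑ i, w i) ^ (k - ∑ i, α i) := by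
      rw [Fin.prod_univ_castSucc]
      simp only [hβdef, Fin.snoc_castSucc, Fin.snoc_last]
    rw [bern, hmult, hprod]
    ring

lemma BA.main_aux (n k : ℕ) (hk : 1 ≤ k) (A : (Fin n → ℝ) → ℝ)
    (hlip : ∀ w ∈ unitSimplex n, ∀ w' ∈ unitSimplex n,
      |A w - A w'| ≤ (∑ i, |w i - w' i|) + |(1 - ∑ i, w i) - (1 - ∑ i, w' i)|)
    (w : Fin n → ℝ) (hw : w ∈ unitSimplex n) :
    |(∑ α ∈ Gamma n k, A (fun i => (α i : ℝ) / k) * bern n k α w) - A w| ≤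
      (∑ i, Real.sqrt (w i * (1 - w i) / k)) +
        Real.sqrt ((1 - ∑ i, w i) * (1 - (1 - ∑ i, w i)) / k) := by
  obtain ⟨hw01, hwsum⟩ := hw
  have hkpos : (0:ℝ) < k := by exact_mod_cast hk
  have hk0 : (k:ℝ) ≠ 0 := ne_of_gt hkpos
  set v : Fin (n+1) → ℝ := Fin.snoc w (1 - ∑ i, w i) with hvdef
  have hv0 : ∀ j, 0 ≤ v j := by
    intro j
    refine Fin.lastCases ?_ ?_ j
    · rw [hvdef]; simp only [Fin.snoc_last]; linarith
    · intro i; rw [hvdef]; simp only [Fin.snoc_castSucc]; exact (hw01 i).1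
  have hv1 : ∑ j, v j = 1 := by
    rw [Fin.sum_univ_castSucc, hvdef]
    simp only [Fin.snoc_castSucc, Fin.snoc_last]
    ring
  have hvle : ∀ j, v j ≤ 1 := by
    intro j
    have h := Finset.single_le_sum (f := v) (fun i _ => hv0 i) (mem_univ j)
    rw [hv1] at h
    exact h
  set P : (Fin (n+1) → ℕ) → ℝ :=
    fun β => (Nat.multinomial univ β : ℝ) * ∏ j, v j ^ β j with hPdef
  set T := piAntidiag (univ : Finset (Fin (n+1))) k with hTdef
  have hP0 : ∀ β ∈ T, 0 ≤ P β := by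
    intro β _
    apply mul_nonneg (Nat.cast_nonneg _)
    exact Finset.prod_nonneg fun j _ => pow_nonneg (hv0 j) _
  have hPsum : ∑ β ∈ T, P β = 1 := BA.mom0 k v hv1
  -- rewrite the Bernstein sum
  have hbr := BA.bridge n k (fun α => A (fun i => (α i : ℝ) / k)) w
  rw [hbr]
  -- bound the difference
  have key : ∀ β ∈ T, |A (fun i => (Fin.init β i : ℝ) / k) - A w|
      ≤ ∑ j, |(β j : ℝ) / k - v j| := by
    intro β hβ
    rw [hTdef, mem_piAntidiag] at hβ
    have hβk : ∀ j, β j ≤ k := by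
      intro j
      have : β j ≤ univ.sum β := Finset.single_le_sum (fun _ _ => Nat.zero_le _) (mem_univ j)
      omega
    have hsumβ : ∑ i : Fin n, β (Fin.castSucc i) + β (Fin.last n) = k := by
      rw [← hβ.1, Fin.sum_univ_castSucc]
    set x : Fin n → ℝ := fun i => (Fin.init β i : ℝ) / k with hxdef
    have hxval : ∀ i, x i = (β (Fin.castSucc i) : ℝ) / k := fun i => rfl
    have hxsum : ∑ i, x i = (∑ i : Fin n, (β (Fin.castSucc i) : ℕ) : ℝ) / k := by
      rw [Finset.sum_congr rfl fun i _ => hxval i, ← Finset.sum_div]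
    have hxS : x ∈ unitSimplex n := by
      constructor
      · intro i
        constructor
        · rw [hxval]; positivity
        · rw [hxval, div_le_one hkpos]
          exact_mod_cast hβk _
      · rw [hxsum, div_le_one hkpos]
        exact_mod_cast Nat.le.intro hsumβ
    have hlast : 1 - ∑ i, x i = (β (Fin.last n) : ℝ) / k := by
      rw [hxsum]
      have hc : ((∑ i : Fin n, β (Fin.castSucc i) : ℕ) : ℝ) + (β (Fin.last n) : ℝ) = (k : ℝ) := by
        exact_mod_cast congrArg (Nat.cast : ℕ → ℝ) hsumβ
      push_cast at hc
      field_simp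
      linarith
    have hl := hlip x hxS w ⟨hw01, hwsum⟩
    have hrhs : (∑ i, |x i - w i|) + |(1 - ∑ i, x i) - (1 - ∑ i, w i)|
        = ∑ j, |(β j : ℝ) / k - v j| := by
      rw [Fin.sum_univ_castSucc (f := fun j => |(β j : ℝ) / k - v j|)]
      congr 1
      · refine Finset.sum_congr rfl fun i _ => ?_
        rw [hxval, hvdef]
        simp only [Fin.snoc_castSucc]
      · rw [hlast, hvdef]
        simp only [Fin.snoc_last]
    rw [hrhs] at hl
    exact hl
  -- per-coordinate variance bound
  have percoord : ∀ j : Fin (n+1),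
      ∑ β ∈ T, |(β j : ℝ) / k - v j| * P β ≤ Real.sqrt (v j * (1 - v j) / k) := by
    intro j
    have hj := BA.jensen_abs T P (fun β => (β j : ℝ) / k - v j) hP0 hPsum
    have hvareq : ∑ β ∈ T, ((β j : ℝ) / k - v j)^2 * P β = v j * (1 - v j) / k := by
      have hpoint : ∀ β ∈ T, ((β j : ℝ) / k - v j)^2 * P β
          = (1/(k:ℝ)^2) * (((k:ℝ) * v j - β j)^2 * P β) := by
        intro β _
        have h : ((β j : ℝ) / k - v j)^2 = (1/(k:ℝ)^2) * ((k:ℝ) * v j - β j)^2 := by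
          field_simp
          ring
        rw [h]
        ring
      rw [Finset.sum_congr rfl hpoint, ← Finset.mul_sum, BA.momvar k v hv1 j]
      field_simp
    rw [hvareq] at hj
    exact hj
  -- assemble
  have hsub : (∑ β ∈ T, A (fun i => (Fin.init β i : ℝ) / k) * P β) - A w
      = ∑ β ∈ T, (A (fun i => (Fin.init β i : ℝ) / k) - A w) * P β := by
    rw [Finset.sum_congr rfl fun β _ => sub_mul (A (fun i => (Fin.init β i : ℝ)/k)) (A w) (P β),
      Finset.sum_sub_distrib, ← Finset.mul_sum, hPsum, mul_one]
  have hfinal : (∑ i, Real.sqrt (w i * (1 - w i) / k)) +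
      Real.sqrt ((1 - ∑ i, w i) * (1 - (1 - ∑ i, w i)) / k)
      = ∑ j, Real.sqrt (v j * (1 - v j) / k) := by
    rw [Fin.sum_univ_castSucc (f := fun j => Real.sqrt (v j * (1 - v j) / k)), hvdef]
    simp only [Fin.snoc_castSucc, Fin.snoc_last]
  rw [hfinal]
  calc |(∑ β ∈ T, A (fun i => (Fin.init β i : ℝ) / k) * P β) - A w|
      = |∑ β ∈ T, (A (fun i => (Fin.init β i : ℝ) / k) - A w) * P β| := by rw [hsub]
    _ ≤ ∑ β ∈ T, |(A (fun i => (Fin.init β i : ℝ) / k) - A w) * P β| :=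
        Finset.abs_sum_le_sum_abs _ _
    _ ≤ ∑ β ∈ T, (∑ j, |(β j : ℝ) / k - v j|) * P β := by
        refine Finset.sum_le_sum fun β hβ => ?_
        rw [abs_mul, abs_of_nonneg (hP0 β hβ)]
        exact mul_le_mul_of_nonneg_right (key β hβ) (hP0 β hβ)
    _ = ∑ j, ∑ β ∈ T, |(β j : ℝ) / k - v j| * P β := by
        rw [Finset.sum_comm]
        exact Finset.sum_congr rfl fun β _ => Finset.sum_mul _ _ _
    _ ≤ ∑ j, Real.sqrt (v j * (1 - v j) / k) :=
        Finset.sum_le_sum fun j _ => percoord j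

lemma BA.part2 (n k : ℕ) (hk : 1 ≤ k) (w : Fin n → ℝ)
    (hw01 : ∀ i, 0 ≤ w i ∧ w i ≤ 1) (hwsum : ∑ i, w i ≤ 1) :
    (∑ i, Real.sqrt (w i * (1 - w i) / k)) +
        Real.sqrt ((1 - ∑ i, w i) * (1 - (1 - ∑ i, w i)) / k)
      ≤ ((n:ℝ) + 1) / (2 * Real.sqrt k) := by
  have hkpos : (0:ℝ) < k := by exact_mod_cast hk
  have hsk : 0 < Real.sqrt k := Real.sqrt_pos.mpr hkpos
  have term : ∀ x : ℝ, 0 ≤ x → x ≤ 1 →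
      Real.sqrt (x * (1 - x) / k) ≤ 1 / (2 * Real.sqrt k) := by
    intro x hx0 hx1
    have hsq : (Real.sqrt k)^2 = k := Real.sq_sqrt (le_of_lt hkpos)
    have h4 : x * (1 - x) ≤ 1/4 := by nlinarith [sq_nonneg (x - 1/2)]
    have h14 : x * (1 - x) / k ≤ (1 / (2 * Real.sqrt k))^2 := by
      have heq : (1 / (2 * Real.sqrt k))^2 = (1/4) / k := by
        rw [div_pow, mul_pow, hsq]
        ring
      rw [heq]
      gcongr
    calc Real.sqrt (x * (1 - x) / k) ≤ Real.sqrt ((1 / (2 * Real.sqrt k))^2) :=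
          Real.sqrt_le_sqrt h14
      _ = 1 / (2 * Real.sqrt k) := Real.sqrt_sq (by positivity)
  have hsumw : ∀ i, 0 ≤ w i ∧ w i ≤ 1 := hw01
  have hlastx : 0 ≤ 1 - ∑ i, w i := by linarith
  have hlastx1 : 1 - ∑ i, w i ≤ 1 := by
    have : 0 ≤ ∑ i, w i := Finset.sum_nonneg fun i _ => (hw01 i).1
    linarith
  calc (∑ i, Real.sqrt (w i * (1 - w i) / k)) +
        Real.sqrt ((1 - ∑ i, w i) * (1 - (1 - ∑ i, w i)) / k)
      ≤ (∑ i : Fin n, 1 / (2 * Real.sqrt k)) + 1 / (2 * Real.sqrt k) := by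
        gcongr with i _
        · exact (term _ (hw01 i).1 (hw01 i).2).trans le_rfl
        · exact term _ hlastx hlastx1
    _ = ((n:ℝ) + 1) / (2 * Real.sqrt k) := by
        rw [Finset.sum_const, card_univ, Fintype.card_fin, nsmul_eq_mul]
        field_simp
theorem bernstein_approximation_of_lipschitz (d : ℕ) (hd : 2 ≤ d)
    (A : (Fin (d - 1) → ℝ) → ℝ)
    (hlip : ∀ w ∈ unitSimplex (d - 1), ∀ w' ∈ unitSimplex (d - 1),
      |A w - A w'| ≤ (∑ i, |w i - w' i|) + |(1 - ∑ i, w i) - (1 - ∑ i, w' i)|)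
    (k : ℕ) (hk : 1 ≤ k) :
    ∀ w ∈ unitSimplex (d - 1),
      |(∑ α ∈ Gamma (d - 1) k, A (fun i => (α i : ℝ) / k) * bern (d - 1) k α w) - A w| ≤
          (∑ i, Real.sqrt (w i * (1 - w i) / k)) +
            Real.sqrt ((1 - ∑ i, w i) * (1 - (1 - ∑ i, w i)) / k) ∧
        (∑ i, Real.sqrt (w i * (1 - w i) / k)) +
            Real.sqrt ((1 - ∑ i, w i) * (1 - (1 - ∑ i, w i)) / k) ≤
          (d : ℝ) / (2 * Real.sqrt k) := by
  intro w hw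
  refine ⟨BA.main_aux (d - 1) k hk A hlip w hw, ?_⟩
  have h2 := BA.part2 (d - 1) k hk w hw.1 hw.2
  have hcast : ((d - 1 : ℕ) : ℝ) + 1 = (d : ℝ) := by
    have : d - 1 + 1 = d := by omega
    exact_mod_cast congrArg (Nat.cast : ℕ → ℝ) this
  rwa [hcast] at h2
end

section
/- Let B : ℝ^{d−1} → ℝ be differentiable at each vertex v₀, v₁, …, v_{d−1} of the simplex, with B(v_j) = 1 for all j ∈ {0,…,d−1}, and suppose B(w) ≥ max(w₁,…,w_d) for all w ∈ S_{d−1}, where w_d = 1 − w₁ − ⋯ − w_{d−1}. Then for all i, j ∈ {0,…,d−1} with i ≠ j, the directional derivative of B at v_j in the direction v_i − v_j satisfies D_{v_i − v_j} B(v_j) ≥ −1. -/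
open Finset

/-- The vertices of the unit simplex in `ℝ^{d−1}`: `vert d 0 = 0` and, for `j ≥ 1`,
`vert d j` is the `(j−1)`-th standard basis vector. -/
def vert (d : ℕ) (j : Fin d) : Fin (d - 1) → ℝ :=
  fun i => if (i : ℕ) + 1 = (j : ℕ) then 1 else 0

lemma vert_zero_or_one (d : ℕ) (j : Fin d) (k : Fin (d - 1)) :
    vert d j k = 0 ∨ vert d j k = 1 := by
  unfold vert; split <;> simp

lemma vert_sum (d : ℕ) (j : Fin d) :
    ∑ k, vert d j k = if (j : ℕ) = 0 then 0 else 1 := by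
  unfold vert
  by_cases h : (j : ℕ) = 0
  · rw [if_pos h]
    refine Finset.sum_eq_zero fun k _ => ?_
    rw [if_neg]; omega
  · rw [if_neg h]
    have hk : (j : ℕ) - 1 < d - 1 := by have := j.isLt; omega
    rw [Finset.sum_eq_single (⟨(j : ℕ) - 1, hk⟩ : Fin (d - 1))]
    · rw [if_pos]; simp; omega
    · intro b _ hb
      rw [if_neg]
      intro hcon
      exact hb (by ext; simp; omega)
    · intro h; exact absurd (Finset.mem_univ _) h

theorem directional_derivative_at_vertices_ge_neg_one (d : ℕ) (hd : 2 ≤ d)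
    (B : (Fin (d - 1) → ℝ) → ℝ)
    (hdiff : ∀ j : Fin d, DifferentiableAt ℝ B (vert d j))
    (hone : ∀ j : Fin d, B (vert d j) = 1)
    (hlow : ∀ w ∈ unitSimplex (d - 1), (∀ i, w i ≤ B w) ∧ 1 - ∑ i, w i ≤ B w) :
    ∀ i j : Fin d, i ≠ j →
      -1 ≤ fderiv ℝ B (vert d j) (vert d i - vert d j) := by
  intro i j hij
  set u : Fin (d - 1) → ℝ := vert d i - vert d j with hu
  set c : Fin (d - 1) → ℝ := vert d j with hc
  set L : ℝ := fderiv ℝ B (vert d j) (vert d i - vert d j) with hL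
  -- the path derivative
  have hφ : HasDerivAt (fun t : ℝ => c + t • u) u 0 := by
    simpa using ((hasDerivAt_id (0 : ℝ)).smul_const u).const_add c
  have hc0 : c + (0 : ℝ) • u = vert d j := by simp [hc]
  have hB : HasFDerivAt B (fderiv ℝ B (vert d j)) (c + (0 : ℝ) • u) := by
    rw [hc0]; exact (hdiff j).hasFDerivAt
  have hg : HasDerivAt (fun t : ℝ => B (c + t • u)) L 0 := hB.comp_hasDerivAt 0 hφ
  -- key lower bound along the path
  have key : ∀ t ∈ Set.Ioc (0 : ℝ) 1, (1 : ℝ) - t ≤ B (c + t • u) := by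
    intro t ht
    obtain ⟨ht0, ht1⟩ := ht
    have hwk : ∀ k, (c + t • u) k = (1 - t) * vert d j k + t * vert d i k := by
      intro k
      simp [hc, hu]
      ring
    have hmem : (c + t • u) ∈ unitSimplex (d - 1) := by
      constructor
      · intro k
        rw [hwk k]
        rcases vert_zero_or_one d j k with h1 | h1 <;>
          rcases vert_zero_or_one d i k with h2 | h2 <;>
          rw [h1, h2] <;> constructor <;> nlinarith
      · have : ∑ k, (c + t • u) k = (1 - t) * ∑ k, vert d j k + t * ∑ k, vert d i k := by
          rw [Finset.mul_sum, Finset.mul_sum, ← Finset.sum_add_distrib]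
          exact Finset.sum_congr rfl fun k _ => hwk k
        rw [this, vert_sum, vert_sum]
        split <;> split <;> nlinarith
    obtain ⟨hcoord, hlast⟩ := hlow _ hmem
    by_cases hj : (j : ℕ) = 0
    · -- use the last coordinate bound
      have hsum : ∑ k, (c + t • u) k ≤ t := by
        have : ∑ k, (c + t • u) k = (1 - t) * ∑ k, vert d j k + t * ∑ k, vert d i k := by
          rw [Finset.mul_sum, Finset.mul_sum, ← Finset.sum_add_distrib]
          exact Finset.sum_congr rfl fun k _ => hwk k
        rw [this, vert_sum, vert_sum, if_pos hj]
        split <;> nlinarith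
      linarith
    · -- use coordinate j - 1
      have hk : (j : ℕ) - 1 < d - 1 := by have := j.isLt; omega
      set k0 : Fin (d - 1) := ⟨(j : ℕ) - 1, hk⟩
      have h1 : vert d j k0 = 1 := by
        unfold vert; rw [if_pos]; simp [k0]; omega
      have h2 : 0 ≤ vert d i k0 := by
        rcases vert_zero_or_one d i k0 with h | h <;> rw [h] <;> norm_num
      have : (1 : ℝ) - t ≤ (c + t • u) k0 := by
        rw [hwk k0, h1]
        nlinarith
      exact le_trans this (hcoord k0)
  -- pass to the limit of slopes
  have g0 : B (c + (0 : ℝ) • u) = 1 := by simp [hc, hone j]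
  have hslope : Filter.Tendsto (slope (fun t : ℝ => B (c + t • u)) 0)
      (nhdsWithin 0 (Set.Ioi 0)) (nhds L) :=
    (hasDerivAt_iff_tendsto_slope.mp hg).mono_left
      (nhdsWithin_mono _ fun x hx => ne_of_gt hx)
  refine ge_of_tendsto hslope ?_
  filter_upwards [Ioc_mem_nhdsGT_of_mem (Set.left_mem_Ico.mpr one_pos)] with t ht
  have h1t := key t ht
  simp only [slope_def_field, sub_zero, g0]
  rw [le_div_iff₀ ht.1]
  linarith
end

section
/- Let B : ℝ^{d−1} → ℝ be differentiable, convex on S_{d−1}, with B(v_j) = 1 for all j ∈ {0,…,d−1}, and suppose that D_{v_i − v_j} B(v_j) ≥ −1 for all i, j ∈ {0,…,d−1} with i ≠ j. Then B(w) ≥ max(w₁,…,w_d) for all w ∈ S_{d−1}, where w_d = 1 − w₁ − ⋯ − w_{d−1}. -/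
open Finset

open Set in
lemma grad_lower_bound {E : Type*} [NormedAddCommGroup E] [NormedSpace ℝ E]
    {s : Set E} {f : E → ℝ} (hc : ConvexOn ℝ s f) (hd : Differentiable ℝ f)
    {x y : E} (hx : x ∈ s) (hy : y ∈ s) :
    f x + fderiv ℝ f x (y - x) ≤ f y := by
  rcases eq_or_ne x y with rfl | hxy
  · simp
  · set g : ℝ → ℝ := fun t => f (x + t • (y - x)) with hg
    have hline : ∀ t : ℝ, t ∈ Icc (0:ℝ) 1 → x + t • (y - x) ∈ s := by
      intro t ht
      have := hc.1 hx hy (by linarith [ht.1, ht.2] : (0:ℝ) ≤ 1 - t) ht.1 (by ring)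
      convert this using 1
      module
    have hgc : ConvexOn ℝ (Icc (0:ℝ) 1) g := by
      constructor
      · exact convex_Icc 0 1
      · intro a ha b hb p q hp hq hpq
        have h1 : x + (p * a + q * b) • (y - x) =
            p • (x + a • (y - x)) + q • (x + b • (y - x)) := by
          obtain rfl : q = 1 - p := by linarith
          module
        have := hc.2 (hline a ha) (hline b hb) hp hq hpq
        simpa [hg, h1] using this
    have hcurve : HasDerivAt (fun t : ℝ => x + t • (y - x)) (y - x) 0 := by
      simpa using ((hasDerivAt_id (0:ℝ)).smul_const (y - x)).const_add x
    have hgd : HasDerivAt g (fderiv ℝ f x (y - x)) 0 := by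
      have hx0 : x + (0:ℝ) • (y - x) = x := by simp
      have := (hd (x + (0:ℝ) • (y - x))).hasFDerivAt.comp_hasDerivAt 0 hcurve
      rw [hx0] at this
      exact this
    have hslope := hgc.le_slope_of_hasDerivWithinAt (by simp : (0:ℝ) ∈ Icc (0:ℝ) 1)
      (by simp : (1:ℝ) ∈ Icc (0:ℝ) 1) one_pos (hgd.hasDerivWithinAt)
    have : slope g 0 1 = f y - f x := by
      simp [slope_def_field, hg]
    rw [this] at hslope
    linarith

theorem lower_bound_from_vertex_derivatives (d : ℕ) (hd : 2 ≤ d)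
    (B : (Fin (d - 1) → ℝ) → ℝ)
    (hdiff : Differentiable ℝ B)
    (hconv : ConvexOn ℝ (unitSimplex (d - 1)) B)
    (hone : ∀ j : Fin d, B (vert d j) = 1)
    (hder : ∀ i j : Fin d, i ≠ j →
      -1 ≤ fderiv ℝ B (vert d j) (vert d i - vert d j)) :
    ∀ w ∈ unitSimplex (d - 1), (∀ i, w i ≤ B w) ∧ 1 - ∑ i, w i ≤ B w := by
  obtain ⟨n, rfl⟩ : ∃ n, d = n + 1 := ⟨d - 1, by omega⟩
  intro w hw
  -- barycentric coordinates
  set c : Fin (n + 1) → ℝ := fun j => Fin.cases (1 - ∑ i, w i) (fun k => w k) j with hc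
  have hcnn : ∀ j, 0 ≤ c j := by
    intro j
    induction j using Fin.cases with
    | zero => simpa [hc] using hw.2
    | succ k => simpa [hc] using (hw.1 k).1
  have hcsum : ∑ j, c j = 1 := by
    rw [Fin.sum_univ_succ]
    simp [hc]
  have hvmem : ∀ j : Fin (n + 1), vert (n + 1) j ∈ unitSimplex n := by
    intro j
    refine ⟨fun i => ?_, ?_⟩
    · unfold vert; split <;> norm_num
    · induction j using Fin.cases with
      | zero => simp [vert]
      | succ k =>
        have : ∀ i : Fin n, ((i : ℕ) + 1 = ((k.succ : Fin (n+1)) : ℕ)) ↔ i = k := by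
          intro i
          simp [Fin.ext_iff]
        simp only [vert, this]
        rw [Finset.sum_ite_eq' univ k (fun _ => (1:ℝ))]
        simp
  -- w as a combination of vertices
  have hcomb : ∀ i : Fin n, ∑ j, c j * vert (n + 1) j i = w i := by
    intro i
    have : ∀ j : Fin (n + 1), ((i : ℕ) + 1 = (j : ℕ)) ↔ j = i.succ := by
      intro j; simp [Fin.ext_iff]; omega
    simp only [vert, this, mul_ite, mul_one, mul_zero]
    rw [Finset.sum_ite_eq' univ i.succ c]
    simp [hc]
  -- main estimate: B w ≥ c j for every j
  have key : ∀ j : Fin (n + 1), c j ≤ B w := by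
    intro j
    have hgrad := grad_lower_bound hconv hdiff (hvmem j) hw
    have hsub : w - vert (n + 1) j = ∑ i, c i • (vert (n + 1) i - vert (n + 1) j) := by
      funext t
      simp only [Finset.sum_apply, Pi.sub_apply, Pi.smul_apply, smul_eq_mul, mul_sub,
        Finset.sum_sub_distrib, ← Finset.sum_mul, hcsum, hcomb]
      ring
    have hmap : fderiv ℝ B (vert (n + 1) j) (w - vert (n + 1) j) =
        ∑ i, c i * fderiv ℝ B (vert (n + 1) j) (vert (n + 1) i - vert (n + 1) j) := by
      rw [hsub, map_sum]
      simp [smul_eq_mul]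
    have hbound : ∑ i, c i * fderiv ℝ B (vert (n + 1) j) (vert (n + 1) i - vert (n + 1) j)
        ≥ ∑ i, (if i = j then 0 else -(c i)) := by
      apply Finset.sum_le_sum
      intro i _
      by_cases hij : i = j
      · subst hij; simp
      · simp only [if_neg hij]
        have := hder i j hij
        nlinarith [hcnn i]
    have hrhs : ∑ i, (if i = j then (0:ℝ) else -(c i)) = c j - 1 := by
      have : ∑ i, (if i = j then (0:ℝ) else -(c i))
          = ∑ i, ((if i = j then c i else 0) - c i) := by
        apply Finset.sum_congr rfl
        intro i _
        by_cases hij : i = j <;> simp [hij]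
      rw [this, Finset.sum_sub_distrib, Finset.sum_ite_eq' univ j c, hcsum]
      simp
    have := hone j
    rw [this, hmap] at hgrad
    rw [hrhs] at hbound
    linarith
  constructor
  · intro i
    have := key i.succ
    simpa [hc] using this
  · have := key 0
    simpa [hc] using this
end

section
/- Let k ≥ 2 be an integer and β : Γ_k → ℝ with degree-raised coefficients β̃ : Γ_{k+1} → ℝ. Suppose β_0 = 1, β_{k e_i} = 1 for every i ∈ {1,…,d−1}, and β_{e_i} ≥ 1 − 1/k, β_{(k−1)e_i} ≥ 1 − 1/k, and β_{(k−1)e_i + e_j} ≥ 1 − 1/k for all i ≠ j in {1,…,d−1}. Then β̃_{e_i} ≥ 1 − 1/(k+1), β̃_{k e_i} ≥ 1 − 1/(k+1), and β̃_{k e_i + e_j} ≥ 1 − 1/(k+1) for all i ≠ j in {1,…,d−1}. -/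
/-!
Raising the degree replaces each coefficient on the boundary by an average of neighbouring
coefficients with weights `1/(k+1)` and `k/(k+1)`. At `e_i`, `k e_i` and `k e_i + e_j` one of the
two neighbours is a vertex coefficient `β_0 = 1` or `β_{k e_i} = 1`, and the other satisfies the
bound `1 - 1/k`, so the average is at least `(1 + (k - 1))/(k + 1) = 1 - 1/(k+1)`.
-/

open Finset

/-- The degree-raised coefficients
`β̃_α = Σ_h (α_h/(k+1)) β_{α−e_h} + (α_{last}/(k+1)) β_α` where
`α_{last} = (k+1) − Σ_h α_h`; summands with `α_h = 0` (resp. `α_{last} = 0`) vanish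
since the corresponding coefficient is `0`. -/
noncomputable def raise (n k : ℕ) (β : (Fin n → ℕ) → ℝ) (α : Fin n → ℕ) : ℝ :=
  (∑ h : Fin n, ((α h : ℝ) / (k + 1)) * β fun i => α i - if i = h then 1 else 0) +
    (((k + 1 - ∑ i, α i : ℕ) : ℝ) / (k + 1)) * β α

section Raise

variable {n : ℕ} (k : ℕ) (β : (Fin n → ℕ) → ℝ)

lemma raise_eq_sum_of_support_subset {α : Fin n → ℕ} {s : Finset (Fin n)}
    (hα : ∀ h ∉ s, α h = 0) :
    raise n k β α = (∑ h ∈ s, ((α h : ℝ) / (k + 1)) * β (α - Pi.single h 1)) +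
      (((k + 1 - ∑ i, α i : ℕ) : ℝ) / (k + 1)) * β α := by
  have hsub (h : Fin n) : (fun i => α i - if i = h then 1 else 0) = α - Pi.single h 1 := by
    ext i; simp [Pi.single_apply]
  simp only [raise, hsub]
  rw [sum_subset (subset_univ s) fun h _ hh => by simp [hα h hh]]

lemma raise_single (i : Fin n) (m : ℕ) :
    raise n k β (Pi.single i m) = (m / (k + 1)) * β (Pi.single i (m - 1)) +
      ((k + 1 - m : ℕ) / (k + 1)) * β (Pi.single i m) := by
  have hsub : Pi.single i m - Pi.single i 1 = (Pi.single i (m - 1) : Fin n → ℕ) := by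
    ext l; obtain rfl | hl := eq_or_ne l i <;> simp [*]
  rw [raise_eq_sum_of_support_subset k β (s := {i}) fun h hh => by simp_all, sum_singleton,
    hsub, sum_pi_single']
  simp

lemma raise_single_add_single {i j : Fin n} (hij : i ≠ j) (m : ℕ) :
    raise n k β (Pi.single i m + Pi.single j 1) =
      (m / (k + 1)) * β (Pi.single i (m - 1) + Pi.single j 1) + 1 / (k + 1) * β (Pi.single i m) +
      ((k - m : ℕ) / (k + 1)) * β (Pi.single i m + Pi.single j 1) := by
  have hsub_i : Pi.single i m + Pi.single j 1 - Pi.single i 1 =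
      (Pi.single i (m - 1) + Pi.single j 1 : Fin n → ℕ) := by
    ext l; obtain rfl | hl := eq_or_ne l i <;> obtain rfl | hl' := eq_or_ne l j <;> simp_all
  have hsub_j : Pi.single i m + Pi.single j 1 - Pi.single j 1 = (Pi.single i m : Fin n → ℕ) := by
    ext l; obtain rfl | hl := eq_or_ne l i <;> obtain rfl | hl' := eq_or_ne l j <;> simp_all
  rw [raise_eq_sum_of_support_subset k β (s := {i, j}) fun h hh => by simp_all, sum_pair hij,
    hsub_i, hsub_j]
  simp [sum_add_distrib, hij, hij.symm]

end Raise

lemma one_sub_one_div_add_one_le_of_one_sub_one_div_le {K x : ℝ} (hK : 0 ≤ K)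
    (hx : 1 - 1 / K ≤ x) :
    1 - 1 / (K + 1) ≤ 1 / (K + 1) + K / (K + 1) * x := by
  -- `K / K ≤ 1` also covers `K = 0`, where `1 / K = 0`.
  have hKx : K - 1 ≤ K * x := calc
    K - 1 ≤ K * (1 - 1 / K) := by rw [mul_one_sub, mul_one_div]; linarith [div_self_le_one K]
    _ ≤ K * x := mul_le_mul_of_nonneg_left hx hK
  have hK1 : 0 < K + 1 := by linarith
  calc 1 - 1 / (K + 1) = (1 + (K - 1)) / (K + 1) := by field_simp; ring
    _ ≤ (1 + K * x) / (K + 1) := by gcongr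
    _ = 1 / (K + 1) + K / (K + 1) * x := by ring

theorem degree_raising_preserves_boundary_constraints_general (d : ℕ)
    (k : ℕ) (β : (Fin (d - 1) → ℕ) → ℝ)
    (h0 : β 0 = 1)
    (hk1 : ∀ i : Fin (d - 1), β (Pi.single i k) = 1)
    (h1 : ∀ i : Fin (d - 1), 1 - 1 / (k : ℝ) ≤ β (Pi.single i 1))
    (h2 : ∀ i : Fin (d - 1), 1 - 1 / (k : ℝ) ≤ β (Pi.single i (k - 1)))
    (h3 : ∀ i j : Fin (d - 1), i ≠ j →
      1 - 1 / (k : ℝ) ≤ β (Pi.single i (k - 1) + Pi.single j 1)) :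
    (∀ i : Fin (d - 1), 1 - 1 / ((k : ℝ) + 1) ≤ raise (d - 1) k β (Pi.single i 1)) ∧
    (∀ i : Fin (d - 1), 1 - 1 / ((k : ℝ) + 1) ≤ raise (d - 1) k β (Pi.single i k)) ∧
    (∀ i j : Fin (d - 1), i ≠ j →
      1 - 1 / ((k : ℝ) + 1) ≤ raise (d - 1) k β (Pi.single i k + Pi.single j 1)) := by
  have hk : (0 : ℝ) ≤ k := k.cast_nonneg
  refine ⟨fun i => ?_, fun i => ?_, fun i j hij => ?_⟩
  · have := one_sub_one_div_add_one_le_of_one_sub_one_div_le hk (h1 i)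
    rw [raise_single, Nat.sub_self, Pi.single_zero, h0, Nat.add_sub_cancel, Nat.cast_one]
    linarith
  · have := one_sub_one_div_add_one_le_of_one_sub_one_div_le hk (h2 i)
    rw [raise_single, Nat.add_sub_cancel_left, hk1, Nat.cast_one]
    linarith
  · have := one_sub_one_div_add_one_le_of_one_sub_one_div_le hk (h3 i j hij)
    rw [raise_single_add_single k β hij, Nat.sub_self, hk1, Nat.cast_zero, zero_div, zero_mul]
    linarith

theorem degree_raising_preserves_boundary_constraints (d : ℕ) (hd : 2 ≤ d)
    (k : ℕ) (hk : 2 ≤ k) (β : (Fin (d - 1) → ℕ) → ℝ)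
    (h0 : β 0 = 1)
    (hk1 : ∀ i : Fin (d - 1), β (Pi.single i k) = 1)
    (h1 : ∀ i : Fin (d - 1), 1 - 1 / (k : ℝ) ≤ β (Pi.single i 1))
    (h2 : ∀ i : Fin (d - 1), 1 - 1 / (k : ℝ) ≤ β (Pi.single i (k - 1)))
    (h3 : ∀ i j : Fin (d - 1), i ≠ j →
      1 - 1 / (k : ℝ) ≤ β (Pi.single i (k - 1) + Pi.single j 1)) :
    (∀ i : Fin (d - 1), 1 - 1 / ((k : ℝ) + 1) ≤ raise (d - 1) k β (Pi.single i 1)) ∧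
    (∀ i : Fin (d - 1), 1 - 1 / ((k : ℝ) + 1) ≤ raise (d - 1) k β (Pi.single i k)) ∧
    (∀ i j : Fin (d - 1), i ≠ j →
      1 - 1 / ((k : ℝ) + 1) ≤ raise (d - 1) k β (Pi.single i k + Pi.single j 1)) :=
  degree_raising_preserves_boundary_constraints_general d k β h0 hk1 h1 h2 h3
end
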